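/- Let γ ≥ 0, β > 0, and let V : ℝ → ℝ be twice differentiable with V'(0) = 0 and V''(0) = −β. Suppose for some δ > 0 that ℘ : (0, δ) → ℝ is differentiable, strictly positive, satisfies ℘'(x) = −γ − V'(x)/℘(x) on (0, δ), and ℘(x) → 0 as x → 0⁺. If the limit L = lim_{x → 0⁺} ℘(x)/x exists and L > 0, then L² + γL − β = 0, hence L = λ₊ = (−γ + √(γ² + 4β))/2. Symmetrically, if V'(a) = 0 and V''(a) = −β at a point a, ℘ is differentiable and strictly positive on (a − δ, a) with ℘'(x) = −γ − V'(x)/℘(x) and ℘(x) → 0 as x → a⁻, and the limit M = lim_{x → a⁻} ℘(x)/(x − a) exists with M < 0, then M² + γM − β = 0, hence M = λ₋ = (−γ − √(γ² + 4β))/2. -/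

import Mathlib

/-!
Near the saddle `V'(x) ≈ -β (x - a)`, so along an orbit with `℘(x) ≈ L (x - a)` the orbit equation
forces `℘'(x) → -γ + β / L`. Since `℘` vanishes at the saddle, L'Hôpital's rule identifies this
limit with `lim ℘(x) / (x - a) = L`, giving `L² + γ L - β = 0`; the sign of `L` then picks the root.
-/

open Filter Set Topology

variable {γ β a L : ℝ} {V P : ℝ → ℝ}

theorem tendsto_div_sub_of_hasDerivAt {f : ℝ → ℝ} {f' : ℝ} (hf : HasDerivAt f f' a)
    (ha : f a = 0) : Tendsto (fun x => f x / (x - a)) (𝓝[≠] a) (𝓝 f') := by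
  exact hf.tendsto_slope.congr fun x => by rw [slope_def_field, ha, sub_zero]

theorem tendsto_deriv_of_orbit {l : Filter ℝ} (hl : l ≤ 𝓝[≠] a)
    (hV : HasDerivAt (deriv V) (-β) a) (hVa : deriv V a = 0)
    (hode : ∀ᶠ x in l, deriv P x = -γ - deriv V x / P x)
    (hPL : Tendsto (fun x => P x / (x - a)) l (𝓝 L)) (hL : L ≠ 0) :
    Tendsto (deriv P) l (𝓝 (-γ + β / L)) := by
  have hxP : Tendsto (fun x => (x - a) / P x) l (𝓝 L⁻¹) := by
    simpa only [inv_div] using hPL.inv₀ hL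
  have hVP := ((tendsto_div_sub_of_hasDerivAt hV hVa).mono_left hl).mul hxP
  rw [show -γ + β / L = -γ - -β * L⁻¹ by ring]
  refine (tendsto_const_nhds.sub hVP).congr' ?_
  filter_upwards [hode, hl self_mem_nhdsWithin] with x hx hxa
  rw [hx, div_mul_div_cancel₀ (sub_ne_zero.2 hxa)]

theorem sq_add_mul_sub_eq_zero_of_eq_neg_add_div (h : L = -γ + β / L) (hL : L ≠ 0) :
    L ^ 2 + γ * L - β = 0 := by
  field_simp at h
  linear_combination h

theorem sq_add_mul_sub_eq_zero_of_tendsto_nhdsGT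
    (hV : HasDerivAt (deriv V) (-β) a) (hVa : deriv V a = 0)
    (hP : ∀ᶠ x in 𝓝[>] a, DifferentiableAt ℝ P x)
    (hode : ∀ᶠ x in 𝓝[>] a, deriv P x = -γ - deriv V x / P x)
    (hP0 : Tendsto P (𝓝[>] a) (𝓝 0))
    (hPL : Tendsto (fun x => P x / (x - a)) (𝓝[>] a) (𝓝 L)) (hL : L ≠ 0) :
    L ^ 2 + γ * L - β = 0 := by
  have hP' := tendsto_deriv_of_orbit (nhdsGT_le_nhdsNE a) hV hVa hode hPL hL
  have hlhop : Tendsto (fun x => P x / (x - a)) (𝓝[>] a) (𝓝 (-γ + β / L)) :=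
    deriv.lhopital_zero_nhdsGT hP (by simp) hP0
      (tendsto_sub_nhds_zero_iff.2 nhdsWithin_le_nhds) (by simpa using hP')
  exact sq_add_mul_sub_eq_zero_of_eq_neg_add_div (tendsto_nhds_unique hPL hlhop) hL

theorem sq_add_mul_sub_eq_zero_of_tendsto_nhdsLT
    (hV : HasDerivAt (deriv V) (-β) a) (hVa : deriv V a = 0)
    (hP : ∀ᶠ x in 𝓝[<] a, DifferentiableAt ℝ P x)
    (hode : ∀ᶠ x in 𝓝[<] a, deriv P x = -γ - deriv V x / P x)
    (hP0 : Tendsto P (𝓝[<] a) (𝓝 0))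
    (hPL : Tendsto (fun x => P x / (x - a)) (𝓝[<] a) (𝓝 L)) (hL : L ≠ 0) :
    L ^ 2 + γ * L - β = 0 := by
  have hP' := tendsto_deriv_of_orbit (nhdsLT_le_nhdsNE a) hV hVa hode hPL hL
  have hlhop : Tendsto (fun x => P x / (x - a)) (𝓝[<] a) (𝓝 (-γ + β / L)) :=
    deriv.lhopital_zero_nhdsLT hP (by simp) hP0
      (tendsto_sub_nhds_zero_iff.2 nhdsWithin_le_nhds) (by simpa using hP')
  exact sq_add_mul_sub_eq_zero_of_eq_neg_add_div (tendsto_nhds_unique hPL hlhop) hL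

theorem sqrt_discrim_eq_abs_of_sq_add_mul_sub_eq_zero (h : L ^ 2 + γ * L - β = 0) :
    Real.sqrt (γ ^ 2 + 4 * β) = |2 * L + γ| := by
  rw [← Real.sqrt_sq_eq_abs]
  congr 1
  linear_combination (-4) * h

theorem eq_neg_add_sqrt_of_sq_add_mul_sub_eq_zero (h : L ^ 2 + γ * L - β = 0) (hβ : 0 < β)
    (hL : 0 < L) : L = (-γ + Real.sqrt (γ ^ 2 + 4 * β)) / 2 := by
  have hpos : 0 ≤ 2 * L + γ := by nlinarith
  rw [sqrt_discrim_eq_abs_of_sq_add_mul_sub_eq_zero h, abs_of_nonneg hpos]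
  ring

theorem eq_neg_sub_sqrt_of_sq_add_mul_sub_eq_zero (h : L ^ 2 + γ * L - β = 0) (hβ : 0 < β)
    (hL : L < 0) : L = (-γ - Real.sqrt (γ ^ 2 + 4 * β)) / 2 := by
  have hneg : 2 * L + γ ≤ 0 := by nlinarith
  rw [sqrt_discrim_eq_abs_of_sq_add_mul_sub_eq_zero h, abs_of_nonpos hneg]
  ring

theorem orbit_tangency_slopes_at_saddle_general
    (γ β : ℝ) (hβ : 0 < β)
    (V : ℝ → ℝ) (hV2 : Differentiable ℝ (deriv V)) :
    (∀ δ : ℝ, 0 < δ → ∀ P : ℝ → ℝ,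
      deriv V 0 = 0 → deriv (deriv V) 0 = -β →
      (∀ x ∈ Set.Ioo (0:ℝ) δ, DifferentiableAt ℝ P x) →
      (∀ x ∈ Set.Ioo (0:ℝ) δ, 0 < P x) →
      (∀ x ∈ Set.Ioo (0:ℝ) δ, deriv P x = -γ - deriv V x / P x) →
      Tendsto P (nhdsWithin 0 (Set.Ioi 0)) (nhds 0) →
      ∀ L : ℝ, Tendsto (fun x => P x / x) (nhdsWithin 0 (Set.Ioi 0)) (nhds L) →
        0 < L →
        L ^ 2 + γ * L - β = 0 ∧ L = (-γ + Real.sqrt (γ ^ 2 + 4 * β)) / 2) ∧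
    (∀ a δ : ℝ, 0 < δ → ∀ P : ℝ → ℝ,
      deriv V a = 0 → deriv (deriv V) a = -β →
      (∀ x ∈ Set.Ioo (a - δ) a, DifferentiableAt ℝ P x) →
      (∀ x ∈ Set.Ioo (a - δ) a, 0 < P x) →
      (∀ x ∈ Set.Ioo (a - δ) a, deriv P x = -γ - deriv V x / P x) →
      Tendsto P (nhdsWithin a (Set.Iio a)) (nhds 0) →
      ∀ M : ℝ, Tendsto (fun x => P x / (x - a)) (nhdsWithin a (Set.Iio a)) (nhds M) →
        M < 0 →
        M ^ 2 + γ * M - β = 0 ∧ M = (-γ - Real.sqrt (γ ^ 2 + 4 * β)) / 2) := by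
  refine ⟨fun δ hδ P hV0 hV''0 hPdiff _ hode hP0 L hPL hL => ?_,
    fun a δ hδ P hVa hV''a hPdiff _ hode hP0 M hPM hM => ?_⟩
  · have hI : Ioo 0 δ ∈ 𝓝[>] (0 : ℝ) := Ioo_mem_nhdsGT hδ
    have hq := sq_add_mul_sub_eq_zero_of_tendsto_nhdsGT (hV''0 ▸ (hV2 0).hasDerivAt) hV0
      (eventually_of_mem hI hPdiff) (eventually_of_mem hI hode) hP0
      (by simpa only [sub_zero] using hPL) hL.ne'
    exact ⟨hq, eq_neg_add_sqrt_of_sq_add_mul_sub_eq_zero hq hβ hL⟩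
  · have hI : Ioo (a - δ) a ∈ 𝓝[<] a := Ioo_mem_nhdsLT (sub_lt_self a hδ)
    have hq := sq_add_mul_sub_eq_zero_of_tendsto_nhdsLT (hV''a ▸ (hV2 a).hasDerivAt) hVa
      (eventually_of_mem hI hPdiff) (eventually_of_mem hI hode) hP0 hPM hM.ne
    exact ⟨hq, eq_neg_sub_sqrt_of_sq_add_mul_sub_eq_zero hq hβ hM⟩

theorem orbit_tangency_slopes_at_saddle
    (γ β : ℝ) (hγ : 0 ≤ γ) (hβ : 0 < β)
    (V : ℝ → ℝ) (hV1 : Differentiable ℝ V) (hV2 : Differentiable ℝ (deriv V)) :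
    (∀ δ : ℝ, 0 < δ → ∀ P : ℝ → ℝ,
      deriv V 0 = 0 → deriv (deriv V) 0 = -β →
      (∀ x ∈ Set.Ioo (0:ℝ) δ, DifferentiableAt ℝ P x) →
      (∀ x ∈ Set.Ioo (0:ℝ) δ, 0 < P x) →
      (∀ x ∈ Set.Ioo (0:ℝ) δ, deriv P x = -γ - deriv V x / P x) →
      Tendsto P (nhdsWithin 0 (Set.Ioi 0)) (nhds 0) →
      ∀ L : ℝ, Tendsto (fun x => P x / x) (nhdsWithin 0 (Set.Ioi 0)) (nhds L) →
        0 < L →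
        L ^ 2 + γ * L - β = 0 ∧ L = (-γ + Real.sqrt (γ ^ 2 + 4 * β)) / 2) ∧
    (∀ a δ : ℝ, 0 < δ → ∀ P : ℝ → ℝ,
      deriv V a = 0 → deriv (deriv V) a = -β →
      (∀ x ∈ Set.Ioo (a - δ) a, DifferentiableAt ℝ P x) →
      (∀ x ∈ Set.Ioo (a - δ) a, 0 < P x) →
      (∀ x ∈ Set.Ioo (a - δ) a, deriv P x = -γ - deriv V x / P x) →
      Tendsto P (nhdsWithin a (Set.Iio a)) (nhds 0) →
      ∀ M : ℝ, Tendsto (fun x => P x / (x - a)) (nhdsWithin a (Set.Iio a)) (nhds M) →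
        M < 0 →
        M ^ 2 + γ * M - β = 0 ∧ M = (-γ - Real.sqrt (γ ^ 2 + 4 * β)) / 2) :=
  orbit_tangency_slopes_at_saddle_general γ β hβ V hV2
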